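/- Let x solve the self-appraisal dynamics with stochastic relative interaction matrices C(t_k) (zero diagonal), strong connectivity of every B-window union graph, and dwell times in [τ_min, τ_max]. If x(t₀) ∈ Δₙ \ {e₁,…,eₙ} has m ≥ 2 nonzero entries, then the set S(t) = {i : xᵢ(t) > 0} is nondecreasing in t (with respect to inclusion) and x(t) > 0 componentwise for all t ≥ t_{(n−m)B}. -/

import Mathlib

/-!
The flow conserves `∑ xᵢ` (the matrices are row-stochastic), and it cannot leave the nonnegative
orthant: the squared negative mass `φ = ∑ (xᵢ⁻)²` satisfies `φ' ≤ L φ` on every compact time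
interval, so `φ(t₀) = 0` forces `φ ≡ 0` by Grönwall. On the simplex `xᵢ + ẋᵢ ≥ 0`, so `eᵗ xᵢ(t)`
is nondecreasing and positive coordinates stay positive. If moreover `cₐᵢ > 0` on an interval
where `xₐ ∈ (0, 1)` (which holds as soon as two coordinates are positive), then `eᵗ xᵢ(t)` is
strictly increasing and `xᵢ` becomes positive. By connectivity, every window of `B` switching
intervals contains an arc leaving the current support, which therefore grows by at least one
coordinate per window.
-/

open Finset Matrix

section Calculus

open Set

lemma negPart_sq_sub_sub_le (y z : ℝ) :
    |z⁻ ^ 2 - y⁻ ^ 2 - (z - y) * (-2 * y⁻)| ≤ (z - y) ^ 2 := by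
  rcases le_total y 0 with hy | hy <;> rcases le_total z 0 with hz | hz <;>
  simp only [negPart_of_nonpos, negPart_of_nonneg, hy, hz] <;>
  rw [abs_le] <;> constructor <;> nlinarith

lemma hasDerivAt_negPart_sq (y : ℝ) : HasDerivAt (fun z : ℝ => z⁻ ^ 2) (-2 * y⁻) y := by
  rw [hasDerivAt_iff_isLittleO]
  refine Asymptotics.IsBigO.trans_isLittleO ?_ (Asymptotics.isLittleO_pow_sub_sub y one_lt_two)
  refine Asymptotics.IsBigO.of_bound 1 (Filter.Eventually.of_forall fun z => ?_)
  simpa [Real.norm_eq_abs, sq_abs] using negPart_sq_sub_sub_le y z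

lemma nonpos_of_hasDerivAt_le_mul {φ φ' : ℝ → ℝ} {a b L : ℝ} (hφ : ContinuousOn φ (Icc a b))
    (hφ' : ∀ v ∈ Ico a b, HasDerivAt φ (φ' v) v) (ha : φ a ≤ 0)
    (hbound : ∀ v ∈ Ico a b, φ' v ≤ L * φ v) {v : ℝ} (hv : v ∈ Icc a b) : φ v ≤ 0 := by
  simpa [gronwallBound_ε0_δ0] using le_gronwallBound_of_liminf_deriv_right_le (ε := 0) hφ
    (fun u hu _ hr => (hφ' u hu).hasDerivWithinAt.liminf_right_slope_le hr) ha
    (by simpa using hbound) v hv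

lemma hasDerivAt_exp_mul {f : ℝ → ℝ} {f' v : ℝ} (hf : HasDerivAt f f' v) :
    HasDerivAt (fun s => Real.exp s * f s) (Real.exp v * (f v + f')) v := by
  simpa only [mul_add] using (Real.hasDerivAt_exp v).fun_mul hf

lemma monotoneOn_exp_mul {f f' : ℝ → ℝ} {a b : ℝ} (hf : ContinuousOn f (Icc a b))
    (hf' : ∀ v ∈ Ioo a b, HasDerivAt f (f' v) v) (h : ∀ v ∈ Ioo a b, 0 ≤ f v + f' v) :
    MonotoneOn (fun v => Real.exp v * f v) (Icc a b) := by
  refine monotoneOn_of_hasDerivWithinAt_nonneg (f' := fun v => Real.exp v * (f v + f' v))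
    (convex_Icc a b) (Real.continuous_exp.continuousOn.mul hf) (fun v hv => ?_) fun v hv => ?_
  · rw [interior_Icc] at hv
    exact (hasDerivAt_exp_mul (hf' v hv)).hasDerivWithinAt
  · rw [interior_Icc] at hv
    exact mul_nonneg (Real.exp_pos v).le (h v hv)

lemma strictMonoOn_exp_mul {f f' : ℝ → ℝ} {a b : ℝ} (hf : ContinuousOn f (Icc a b))
    (hf' : ∀ v ∈ Ioo a b, HasDerivAt f (f' v) v) (h : ∀ v ∈ Ioo a b, 0 < f v + f' v) :
    StrictMonoOn (fun v => Real.exp v * f v) (Icc a b) := by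
  refine strictMonoOn_of_hasDerivWithinAt_pos (f' := fun v => Real.exp v * (f v + f' v))
    (convex_Icc a b) (Real.continuous_exp.continuousOn.mul hf) (fun v hv => ?_) fun v hv => ?_
  · rw [interior_Icc] at hv
    exact (hasDerivAt_exp_mul (hf' v hv)).hasDerivWithinAt
  · rw [interior_Icc] at hv
    exact mul_pos (Real.exp_pos v) (h v hv)

lemma exists_mem_Ico_of_le_sub {t : ℕ → ℝ} {τ u : ℝ} (hτ : 0 < τ)
    (ht : ∀ k, τ ≤ t (k + 1) - t k) (hu : t 0 ≤ u) : ∃ k, u ∈ Ico (t k) (t (k + 1)) := by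
  have hlin : ∀ k : ℕ, t 0 + k * τ ≤ t k := by
    intro k
    induction k with
    | zero => simp
    | succ k ih => push_cast; linarith [ht k]
  have hunb : ¬BddAbove (range t) := by
    rintro ⟨M, hM⟩
    obtain ⟨k, hk⟩ := exists_nat_gt ((M - t 0) / τ)
    rw [div_lt_iff₀ hτ] at hk
    linarith [hlin k, hM (mem_range_self k)]
  have hcover := iUnion_Ico_map_succ_eq_Ici (f := t)
    (fun k => (strictMono_nat_of_lt_succ fun k => by linarith [ht k]).monotone k.zero_le) hunb
  have hu' : u ∈ ⋃ k : ℕ, Ico (t k) (t (Order.succ k)) := hcover ▸ hu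
  simpa using hu'

end Calculus

section SelfAppraisalField

variable {ι : Type*} [Fintype ι]

def selfAppraisalField (C : Matrix ι ι ℝ) (x : ι → ℝ) (i : ι) : ℝ :=
  -(1 - x i) * x i + ∑ j, C j i * (1 - x j) * x j

variable {C : Matrix ι ι ℝ} {x : ι → ℝ}

lemma sum_selfAppraisalField [DecidableEq ι] (hC : C ∈ rowStochastic ℝ ι) (x : ι → ℝ) :
    ∑ i, selfAppraisalField C x i = 0 := by
  simp only [selfAppraisalField, sum_add_distrib]
  rw [sum_comm]
  simp only [mul_assoc, ← sum_mul, sum_row_of_mem_rowStochastic hC, one_mul, neg_mul,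
    sum_neg_distrib, neg_add_cancel]

lemma self_add_selfAppraisalField (C : Matrix ι ι ℝ) (x : ι → ℝ) (i : ι) :
    x i + selfAppraisalField C x i = x i ^ 2 + ∑ j, C j i * (1 - x j) * x j := by
  rw [selfAppraisalField]
  ring

lemma neg_mul_sum_negPart_le_one_sub_mul_self {M : ℝ} (hsum : ∑ i, x i = 1)
    (hM : ∀ i, |x i| ≤ M) (j : ι) : -((M + 1) * ∑ k, (x k)⁻) ≤ (1 - x j) * x j := by
  have hneg : (x j)⁻ ≤ ∑ k, (x k)⁻ :=
    single_le_sum (f := fun k => (x k)⁻) (fun k _ => negPart_nonneg _) (mem_univ j)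
  -- a coordinate can exceed `1` only by the negative mass, since the coordinates sum to `1`
  have hpos : x j ≤ 1 + ∑ k, (x k)⁻ := calc
    x j ≤ ∑ k, (x k)⁺ := (le_posPart _).trans
      (single_le_sum (f := fun k => (x k)⁺) (fun k _ => posPart_nonneg _) (mem_univ j))
    _ = 1 + ∑ k, (x k)⁻ := by
      rw [← hsum, ← sum_add_distrib]
      exact sum_congr rfl fun k _ => by linarith [posPart_sub_negPart (x k)]
  have hMj := abs_le.1 (hM j)
  rcases le_total (x j) 0 with h | h
  · rw [negPart_of_nonpos h] at hneg
    nlinarith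
  · rcases le_total (x j) 1 with h1 | h1
    · nlinarith [negPart_nonneg (x j)]
    · nlinarith

lemma neg_two_negPart_mul_selfAppraisalField_le [DecidableEq ι] {M : ℝ}
    (hC : C ∈ rowStochastic ℝ ι) (hsum : ∑ i, x i = 1) (hM : ∀ i, |x i| ≤ M) (i : ι) :
    -2 * (x i)⁻ * selfAppraisalField C x i ≤
      2 * Fintype.card ι * (M + 1) * (∑ k, (x k)⁻) * (x i)⁻ := by
  rcases le_total 0 (x i) with h | h
  · simp [negPart_of_nonneg h]
  have hg : 0 ≤ (M + 1) * ∑ k, (x k)⁻ :=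
    mul_nonneg (by linarith [abs_nonneg (x i), hM i]) (sum_nonneg fun k _ => negPart_nonneg _)
  have hcol : -(Fintype.card ι * ((M + 1) * ∑ k, (x k)⁻)) ≤ ∑ j, C j i * (1 - x j) * x j := by
    rw [← nsmul_eq_mul, ← card_univ, ← sum_const, ← sum_neg_distrib]
    refine sum_le_sum fun j _ => ?_
    have hCji₀ := nonneg_of_mem_rowStochastic hC (i := j) (j := i)
    have hCji₁ := le_one_of_mem_rowStochastic hC (i := j) (j := i)
    have hj := neg_mul_sum_negPart_le_one_sub_mul_self hsum hM j
    rw [mul_assoc]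
    nlinarith
  rw [negPart_of_nonpos h, selfAppraisalField]
  nlinarith [mul_nonneg (neg_nonneg.2 h) (sq_nonneg (x i))]

lemma sum_neg_two_negPart_mul_selfAppraisalField_le [DecidableEq ι] {M : ℝ}
    (hC : C ∈ rowStochastic ℝ ι) (hsum : ∑ i, x i = 1) (hM : ∀ i, |x i| ≤ M) :
    ∑ i, -2 * (x i)⁻ * selfAppraisalField C x i ≤
      2 * Fintype.card ι ^ 2 * (M + 1) * ∑ i, (x i)⁻ ^ 2 := by
  rcases isEmpty_or_nonempty ι with hι | ⟨⟨j⟩⟩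
  · simp
  have hM1 : 0 ≤ M + 1 := by linarith [abs_nonneg (x j), hM j]
  calc ∑ i, -2 * (x i)⁻ * selfAppraisalField C x i
      ≤ ∑ i, 2 * Fintype.card ι * (M + 1) * (∑ k, (x k)⁻) * (x i)⁻ :=
        sum_le_sum fun i _ => neg_two_negPart_mul_selfAppraisalField_le hC hsum hM i
    _ = 2 * Fintype.card ι * (M + 1) * (∑ k, (x k)⁻) ^ 2 := by rw [← mul_sum]; ring
    _ ≤ 2 * Fintype.card ι * (M + 1) * (Fintype.card ι * ∑ i, (x i)⁻ ^ 2) := by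
        gcongr
        exact sq_sum_le_card_mul_sum_sq
    _ = _ := by ring

noncomputable def posSupport (x : ι → ℝ) : Finset ι := univ.filter fun i => 0 < x i

@[simp]
lemma mem_posSupport {i : ι} : i ∈ posSupport x ↔ 0 < x i := by
  simp [posSupport]

lemma lt_one_of_one_lt_card_posSupport (hx : x ∈ stdSimplex ℝ ι)
    (h : 1 < #(posSupport x)) (a : ι) : x a < 1 := by
  classical
  obtain ⟨b, hb, hba⟩ := exists_mem_ne h a
  have hpair : x a + x b ≤ 1 := by
    rw [← hx.2, ← sum_pair hba.symm]
    exact sum_le_sum_of_subset_of_nonneg (subset_univ _) fun j _ _ => hx.1 j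
  linarith [mem_posSupport.1 hb]

lemma mul_one_sub_mul_nonneg_of_mem_stdSimplex (hC : ∀ i j, 0 ≤ C i j)
    (hx : x ∈ stdSimplex ℝ ι) (i j : ι) : 0 ≤ C j i * (1 - x j) * x j := by
  have hxj := mem_Icc_of_mem_stdSimplex hx j
  exact mul_nonneg (mul_nonneg (hC j i) (by linarith [hxj.2])) hxj.1

lemma add_selfAppraisalField_nonneg (hC : ∀ i j, 0 ≤ C i j) (hx : x ∈ stdSimplex ℝ ι)
    (i : ι) : 0 ≤ x i + selfAppraisalField C x i := by
  rw [self_add_selfAppraisalField]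
  exact add_nonneg (sq_nonneg _)
    (sum_nonneg fun j _ => mul_one_sub_mul_nonneg_of_mem_stdSimplex hC hx i j)

lemma add_selfAppraisalField_pos (hC : ∀ i j, 0 ≤ C i j) (hx : x ∈ stdSimplex ℝ ι)
    {a i : ι} (hai : 0 < C a i) (ha : 0 < x a) (ha1 : x a < 1) :
    0 < x i + selfAppraisalField C x i := by
  rw [self_add_selfAppraisalField]
  refine add_pos_of_nonneg_of_pos (sq_nonneg _) ?_
  exact sum_pos' (fun j _ => mul_one_sub_mul_nonneg_of_mem_stdSimplex hC hx i j)
    ⟨a, mem_univ a, by positivity⟩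

end SelfAppraisalField

def IsSelfAppraisalSolution {ι : Type*} [Fintype ι] [DecidableEq ι] (x : ℝ → ι → ℝ) (t₀ : ℝ) :
    Prop :=
  ∀ u, t₀ ≤ u → ∃ C ∈ rowStochastic ℝ ι,
    ∀ i, HasDerivAt (fun s => x s i) (selfAppraisalField C (x u) i) u

namespace IsSelfAppraisalSolution

open Set

variable {ι : Type*} [Fintype ι] [DecidableEq ι] {x : ℝ → ι → ℝ} {t₀ : ℝ}

lemma hasDerivAt (hx : IsSelfAppraisalSolution x t₀) {u : ℝ} (hu : t₀ ≤ u) (i : ι) :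
    HasDerivAt (fun s => x s i) (deriv (fun s => x s i) u) u :=
  let ⟨_, _, hd⟩ := hx u hu
  (hd i).differentiableAt.hasDerivAt

lemma continuousOn (hx : IsSelfAppraisalSolution x t₀) : ContinuousOn x (Ici t₀) :=
  fun _ hu => (continuousAt_pi.2 fun i => (hx.hasDerivAt hu i).continuousAt).continuousWithinAt

lemma sum_eq (hx : IsSelfAppraisalSolution x t₀) {u : ℝ} (hu : t₀ ≤ u) :
    ∑ i, x u i = ∑ i, x t₀ i := by
  have hderiv : ∀ v ∈ Ici t₀, HasDerivAt (fun s => ∑ i, x s i) 0 v := by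
    intro v hv
    obtain ⟨C, hC, hd⟩ := hx v hv
    have := HasDerivAt.fun_sum (u := univ) fun i _ => hd i
    rwa [sum_selfAppraisalField hC] at this
  exact constant_of_has_deriv_right_zero
    (fun v hv => (hderiv v hv.1).continuousAt.continuousWithinAt)
    (fun v hv => (hderiv v hv.1).hasDerivWithinAt) u ⟨hu, le_rfl⟩

lemma exists_bound (hx : IsSelfAppraisalSolution x t₀) (b : ℝ) :
    ∃ M, ∀ v ∈ Icc t₀ b, ∀ i, |x v i| ≤ M := by
  obtain ⟨M, hM⟩ := isCompact_Icc.exists_bound_of_continuousOn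
    (hx.continuousOn.mono Icc_subset_Ici_self)
  exact ⟨M, fun v hv i => (norm_le_pi_norm (x v) i).trans (hM v hv)⟩

lemma nonneg (hx : IsSelfAppraisalSolution x t₀) (h₀ : x t₀ ∈ stdSimplex ℝ ι) {u : ℝ}
    (hu : t₀ ≤ u) (i : ι) : 0 ≤ x u i := by
  obtain ⟨M, hM⟩ := hx.exists_bound u
  set φ : ℝ → ℝ := fun v => ∑ i, (x v i)⁻ ^ 2
  have hφ : ∀ v ∈ Ici t₀, HasDerivAt φ (∑ i, -2 * (x v i)⁻ * deriv (fun s => x s i) v) v :=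
    fun v hv => HasDerivAt.fun_sum fun i _ => (hasDerivAt_negPart_sq _).comp v (hx.hasDerivAt hv i)
  have hbound : ∀ v ∈ Ico t₀ u, ∑ i, -2 * (x v i)⁻ * deriv (fun s => x s i) v ≤
      2 * Fintype.card ι ^ 2 * (M + 1) * φ v := by
    intro v hv
    obtain ⟨C, hC, hd⟩ := hx v hv.1
    simp only [(hd _).deriv]
    exact sum_neg_two_negPart_mul_selfAppraisalField_le hC ((hx.sum_eq hv.1).trans h₀.2)
      (hM v (Ico_subset_Icc_self hv))
  have hφ₀ : φ t₀ ≤ 0 := by simp [φ, negPart_of_nonneg (h₀.1 _)]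
  have hφu : φ u ≤ 0 := nonpos_of_hasDerivAt_le_mul
    (fun v hv => (hφ v hv.1).continuousAt.continuousWithinAt)
    (fun v hv => hφ v hv.1) hφ₀ hbound ⟨hu, le_rfl⟩
  have hi : (x u i)⁻ ^ 2 ≤ 0 :=
    (single_le_sum (f := fun j => (x u j)⁻ ^ 2) (fun j _ => sq_nonneg _) (mem_univ i)).trans hφu
  exact negPart_eq_zero.1 (pow_eq_zero_iff two_ne_zero |>.1 (le_antisymm hi (sq_nonneg _)))

lemma mem_stdSimplex (hx : IsSelfAppraisalSolution x t₀) (h₀ : x t₀ ∈ stdSimplex ℝ ι) {u : ℝ}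
    (hu : t₀ ≤ u) : x u ∈ stdSimplex ℝ ι :=
  ⟨hx.nonneg h₀ hu, (hx.sum_eq hu).trans h₀.2⟩

lemma pos_of_le (hx : IsSelfAppraisalSolution x t₀) (h₀ : x t₀ ∈ stdSimplex ℝ ι) {s u : ℝ}
    (hs : t₀ ≤ s) (hsu : s ≤ u) {i : ι} (hi : 0 < x s i) : 0 < x u i := by
  have hmono := monotoneOn_exp_mul (f := fun v => x v i) (b := u)
    (fun v hv => (hx.hasDerivAt (hs.trans hv.1) i).continuousAt.continuousWithinAt)
    (fun v hv => hx.hasDerivAt (hs.trans hv.1.le) i) fun v hv => by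
      obtain ⟨C, hC, hd⟩ := hx v (hs.trans hv.1.le)
      rw [(hd i).deriv]
      exact add_selfAppraisalField_nonneg hC.1 (hx.mem_stdSimplex h₀ (hs.trans hv.1.le)) i
  have := hmono ⟨le_rfl, hsu⟩ ⟨hsu, le_rfl⟩ hsu
  exact pos_of_mul_pos_right ((mul_pos (Real.exp_pos s) hi).trans_le this) (Real.exp_pos u).le

lemma posSupport_mono (hx : IsSelfAppraisalSolution x t₀) (h₀ : x t₀ ∈ stdSimplex ℝ ι)
    {s u : ℝ} (hs : t₀ ≤ s) (hsu : s ≤ u) : posSupport (x s) ⊆ posSupport (x u) := by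
  intro i
  simpa using hx.pos_of_le h₀ hs hsu

lemma pos_of_rel (hx : IsSelfAppraisalSolution x t₀) (h₀ : x t₀ ∈ stdSimplex ℝ ι)
    (h₂ : 1 < #(posSupport (x t₀))) {C : Matrix ι ι ℝ} (hC : ∀ i j, 0 ≤ C i j) {s u : ℝ}
    (hs : t₀ ≤ s) (hsu : s < u)
    (hdyn : ∀ v ∈ Ioo s u, ∀ i, HasDerivAt (fun r => x r i) (selfAppraisalField C (x v) i) v)
    {a i : ι} (hai : 0 < C a i) (ha : 0 < x s a) : 0 < x u i := by
  have hmono := strictMonoOn_exp_mul (f := fun v => x v i) (b := u)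
    (fun v hv => (hx.hasDerivAt (hs.trans hv.1) i).continuousAt.continuousWithinAt)
    (fun v hv => hdyn v hv i) fun v hv => by
      have hv₀ : t₀ ≤ v := hs.trans hv.1.le
      have h₂v := h₂.trans_le (card_le_card (hx.posSupport_mono h₀ le_rfl hv₀))
      exact add_selfAppraisalField_pos hC (hx.mem_stdSimplex h₀ hv₀) hai
        (hx.pos_of_le h₀ hs hv.1.le ha)
        (lt_one_of_one_lt_card_posSupport (hx.mem_stdSimplex h₀ hv₀) h₂v a)
  have := hmono ⟨le_rfl, hsu.le⟩ ⟨hsu.le, le_rfl⟩ hsu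
  exact pos_of_mul_pos_right ((mul_nonneg (Real.exp_pos s).le (hx.nonneg h₀ hs i)).trans_lt this)
    (Real.exp_pos u).le

end IsSelfAppraisalSolution

lemma Relation.ReflTransGen.exists_rel_mem_notMem {α : Type*} {r : α → α → Prop} {s : Set α}
    {a b : α} (h : Relation.ReflTransGen r a b) (ha : a ∈ s) (hb : b ∉ s) :
    ∃ c d, r c d ∧ c ∈ s ∧ d ∉ s := by
  induction h with
  | refl => exact absurd ha hb
  | @tail c d _ hcd ih =>
    by_cases hc : c ∈ s
    · exact ⟨c, d, hcd, hc, hb⟩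
    · exact ih hc

section Spreading

variable {ι : Type*} [Fintype ι] {P : ℕ → Finset ι} {E : ℕ → ι → ι → Prop} {B : ℕ}

lemma ssubset_add_of_reflTransGen (hmono : Monotone P)
    (hspread : ∀ k a b, E k a b → a ∈ P k → b ∈ P (k + 1)) {l : ℕ}
    (hconn : ∀ i j, Relation.ReflTransGen (fun a b => ∃ k, l ≤ k ∧ k < l + B ∧ E k a b) i j)
    (hne : (P l).Nonempty) (huniv : P l ≠ univ) : P l ⊂ P (l + B) := by
  obtain ⟨a, ha⟩ := hne
  obtain ⟨j, hj⟩ : ∃ j, j ∉ P l := by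
    by_contra! h
    exact huniv (eq_univ_of_forall h)
  obtain ⟨c, d, ⟨k, hlk, hkB, hcd⟩, hc, hd⟩ :=
    (hconn a j).exists_rel_mem_notMem (s := ↑(P l)) ha hj
  exact (ssubset_iff_of_subset (hmono (by omega))).2
    ⟨d, hmono (by omega : k + 1 ≤ l + B) (hspread k c d hcd (hmono hlk hc)), hd⟩

lemma min_card_add_le_card (hmono : Monotone P)
    (hgrow : ∀ k, P k ≠ univ → P k ⊂ P (k + B)) (j : ℕ) :
    min (Fintype.card ι) (#(P 0) + j) ≤ #(P (j * B)) := by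
  induction j with
  | zero => simp
  | succ j ih =>
    rw [Nat.succ_mul]
    by_cases hu : P (j * B) = univ
    · have : P (j * B + B) = univ :=
        eq_univ_of_forall fun i => hmono (Nat.le_add_right _ _) (hu ▸ mem_univ i)
      simp [this]
    · have := card_lt_card (hgrow _ hu)
      omega

lemma eq_univ_of_reflTransGen (hmono : Monotone P)
    (hspread : ∀ k a b, E k a b → a ∈ P k → b ∈ P (k + 1))
    (hconn : ∀ l i j, Relation.ReflTransGen (fun a b => ∃ k, l ≤ k ∧ k < l + B ∧ E k a b) i j)
    (hne : (P 0).Nonempty) : P ((Fintype.card ι - #(P 0)) * B) = univ := by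
  have hgrow : ∀ k, P k ≠ univ → P k ⊂ P (k + B) := fun k =>
    ssubset_add_of_reflTransGen hmono hspread (hconn k) (hne.mono (hmono k.zero_le))
  have := min_card_add_le_card hmono hgrow (Fintype.card ι - #(P 0))
  have := card_le_univ (P 0)
  have := card_le_univ (P ((Fintype.card ι - #(P 0)) * B))
  exact eq_univ_of_card _ (by omega)

end Spreading

theorem positive_in_finite_time_general (n B : ℕ)
    (τmin τmax : ℝ) (hτ : 0 < τmin)
    (t : ℕ → ℝ) (t₀ : ℝ) (ht0 : t 0 = t₀)
    (hgap : ∀ k, t (k + 1) - t k ∈ Set.Icc τmin τmax)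
    (Ck : ℕ → Matrix (Fin n) (Fin n) ℝ)
    (hstoch : ∀ k, (∀ i j, 0 ≤ Ck k i j) ∧ (∀ i, ∑ j, Ck k i j = 1) ∧
      (∀ i, Ck k i i = 0))
    (hconn : ∀ l : ℕ, ∀ i j : Fin n,
      Relation.ReflTransGen
        (fun a b => ∃ k : ℕ, l ≤ k ∧ k < l + B ∧ 0 < Ck k a b) i j)
    (x : ℝ → Fin n → ℝ)
    (hdyn : ∀ k : ℕ, ∀ u ∈ Set.Ico (t k) (t (k + 1)), ∀ i,
      HasDerivAt (fun s => x s i)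
        (-(1 - x u i) * x u i + ∑ j, Ck k j i * (1 - x u j) * x u j) u)
    (hx0 : (∀ i, 0 ≤ x t₀ i) ∧ ∑ i, x t₀ i = 1)
    (m : ℕ) (hm : m = (Finset.univ.filter fun i => x t₀ i ≠ 0).card)
    (hm2 : 2 ≤ m) :
    (∀ s u : ℝ, t₀ ≤ s → s ≤ u →
      {i : Fin n | 0 < x s i} ⊆ {i : Fin n | 0 < x u i}) ∧
    (∀ u : ℝ, t ((n - m) * B) ≤ u → ∀ i, 0 < x u i) := by
  have ht : StrictMono t := strictMono_nat_of_lt_succ fun k => by linarith [(hgap k).1]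
  have ht₀ : ∀ k, t₀ ≤ t k := fun k => ht0 ▸ ht.monotone k.zero_le
  have hC : ∀ k, ∀ i j, 0 ≤ Ck k i j := fun k => (hstoch k).1
  have hsol : IsSelfAppraisalSolution x t₀ := fun u hu => by
    obtain ⟨k, hk⟩ := exists_mem_Ico_of_le_sub hτ (fun k => (hgap k).1) (ht0 ▸ hu)
    exact ⟨Ck k, mem_rowStochastic_iff_sum.2 ⟨hC k, (hstoch k).2.1⟩, hdyn k u hk⟩
  have hsupp₀ : #(posSupport (x t₀)) = m := by
    rw [hm, posSupport]
    congr 1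
    ext i
    simp [(hx0.1 i).lt_iff_ne, eq_comm]
  have hfull : posSupport (x (t ((n - m) * B))) = univ := by
    have := eq_univ_of_reflTransGen (P := fun k => posSupport (x (t k)))
      (E := fun k a b => 0 < Ck k a b)
      (fun k l hkl => hsol.posSupport_mono hx0 (ht₀ k) (ht.monotone hkl))
      (fun k a b hab ha => by
        simpa using hsol.pos_of_rel hx0 (by omega) (hC k) (ht₀ k) (ht k.lt_succ_self)
          (fun v hv => hdyn k v (Set.Ioo_subset_Ico_self hv)) hab (mem_posSupport.1 ha))
      hconn (card_pos.1 (by rw [ht0]; omega))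
    simpa [ht0, hsupp₀] using this
  refine ⟨fun s u hs hsu i => hsol.pos_of_le hx0 hs hsu, fun u hu i => ?_⟩
  have hi : i ∈ posSupport (x (t ((n - m) * B))) := hfull ▸ mem_univ i
  exact hsol.pos_of_le hx0 (ht₀ _) hu (mem_posSupport.1 hi)

/-- Lemma 7: under stochastic relative interaction matrices with zero diagonal,
B-window strong connectivity and bounded dwell times, the set of strictly
positive components is nondecreasing in time, and if x(t₀) ∈ Δₙ \ {e₁,…,eₙ}
has m ≥ 2 nonzero entries then x(t) > 0 componentwise for t ≥ t_{(n−m)B}. -/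
theorem positive_in_finite_time (n B : ℕ) (hB : 1 ≤ B)
    (τmin τmax : ℝ) (hτ : 0 < τmin) (hττ : τmin ≤ τmax)
    (t : ℕ → ℝ) (t₀ : ℝ) (ht0 : t 0 = t₀)
    (hgap : ∀ k, t (k + 1) - t k ∈ Set.Icc τmin τmax)
    (Ck : ℕ → Matrix (Fin n) (Fin n) ℝ)
    (hstoch : ∀ k, (∀ i j, 0 ≤ Ck k i j) ∧ (∀ i, ∑ j, Ck k i j = 1) ∧
      (∀ i, Ck k i i = 0))
    (hconn : ∀ l : ℕ, ∀ i j : Fin n,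
      Relation.ReflTransGen
        (fun a b => ∃ k : ℕ, l ≤ k ∧ k < l + B ∧ 0 < Ck k a b) i j)
    (x : ℝ → Fin n → ℝ)
    (hdyn : ∀ k : ℕ, ∀ u ∈ Set.Ico (t k) (t (k + 1)), ∀ i,
      HasDerivAt (fun s => x s i)
        (-(1 - x u i) * x u i + ∑ j, Ck k j i * (1 - x u j) * x u j) u)
    (hx0 : (∀ i, 0 ≤ x t₀ i) ∧ ∑ i, x t₀ i = 1)
    (hx0ne : ∀ i : Fin n, x t₀ ≠ Pi.single i 1)
    (m : ℕ) (hm : m = (Finset.univ.filter fun i => x t₀ i ≠ 0).card)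
    (hm2 : 2 ≤ m) :
    (∀ s u : ℝ, t₀ ≤ s → s ≤ u →
      {i : Fin n | 0 < x s i} ⊆ {i : Fin n | 0 < x u i}) ∧
    (∀ u : ℝ, t ((n - m) * B) ≤ u → ∀ i, 0 < x u i) :=
  positive_in_finite_time_general n B τmin τmax hτ t t₀ ht0 hgap Ck hstoch hconn x hdyn hx0 m hm hm2
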